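/- arXiv:2601.19772 — 2 statements merged into one kernel-verified Lean document; each statement's English description precedes it below -/
import Mathlib

section
/- For any category C, the set M(C) of normal-form words with multiplication x • y := nf(y ++ x) is a monoid: the operation • is associative and the empty word is a two-sided identity. -/
open CategoryTheory

/-- A word of morphisms in a category `C`: a finite list of morphisms, each recorded
with its source and target. -/
abbrev CatWord (C : Type*) [Category C] : Type _ := List (Σ a b : C, a ⟶ b)

/-- The rewrite relation on words of morphisms: delete an identity entry, or replace
two adjacent composable entries `(f, g)` by the single entry `g ∘ f`. -/
inductive RwStep {C : Type*} [Category C] : CatWord C → CatWord C → Prop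
  | del (u v : CatWord C) (a : C) :
      RwStep (u ++ ⟨a, a, 𝟙 a⟩ :: v) (u ++ v)
  | comp (u v : CatWord C) {a b c : C} (f : a ⟶ b) (g : b ⟶ c) :
      RwStep (u ++ ⟨a, b, f⟩ :: ⟨b, c, g⟩ :: v) (u ++ ⟨a, c, f ≫ g⟩ :: v)


/-- A word is a normal form if no rewrite step applies to it. -/
def IsNormalForm {C : Type*} [Category C] (w : CatWord C) : Prop :=
  ∀ z : CatWord C, ¬ RwStep w z

/-!
Normal forms are computed by an explicit normalizer: read the word from right to left, pushing
each entry onto an already reduced word and composing or cancelling at the junction. This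
normalizer is invariant under rewriting and fixes every normal form, so every normal form
reachable from `w` equals `normalize w`. Both sides of the associativity law are therefore
`normalize (z ++ y ++ x)`, and the unit laws hold because a normal form is its own normal form.
-/

section

variable {C : Type*} [Category C]

lemma RwStep.append_left {w z : CatWord C} (u : CatWord C) (h : RwStep w z) :
    RwStep (u ++ w) (u ++ z) := by
  cases h with
  | del v v' a => simpa using RwStep.del (u ++ v) v' a
  | comp v v' f g => simpa using RwStep.comp (u ++ v) v' f g

lemma RwStep.append_right {w z : CatWord C} (h : RwStep w z) (v : CatWord C) :
    RwStep (w ++ v) (z ++ v) := by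
  cases h with
  | del u u' a => simpa using RwStep.del u (u' ++ v) a
  | comp u u' f g => simpa using RwStep.comp u (u' ++ v) f g

lemma RwStep.reflTransGen_append {w w' v v' : CatWord C} (hw : Relation.ReflTransGen RwStep w w')
    (hv : Relation.ReflTransGen RwStep v v') :
    Relation.ReflTransGen RwStep (w ++ v) (w' ++ v') :=
  (hw.lift (· ++ v) fun _ _ h => h.append_right v).trans
    (hv.lift (w' ++ ·) fun _ _ h => h.append_left w')

namespace CatWord

def Reduced (w : CatWord C) : Prop :=
  (∀ e ∈ w, e ≠ ⟨e.1, e.1, 𝟙 e.1⟩) ∧ w.IsChain fun e e' => e.2.1 ≠ e'.1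

open Classical in
noncomputable def reduceCons : (Σ a b : C, a ⟶ b) → CatWord C → CatWord C
  | e, [] => if e = ⟨e.1, e.1, 𝟙 e.1⟩ then [] else [e]
  | e, e' :: w =>
      if e = ⟨e.1, e.1, 𝟙 e.1⟩ then e' :: w
      else if h : e.2.1 = e'.1 then reduceCons ⟨e.1, e'.2.1, e.2.2 ≫ eqToHom h ≫ e'.2.2⟩ w
      else e :: e' :: w

lemma reduceCons_id (a : C) (w : CatWord C) : reduceCons ⟨a, a, 𝟙 a⟩ w = w := by
  cases w <;> simp [reduceCons]

lemma reduceCons_nil {e : Σ a b : C, a ⟶ b} (he : e ≠ ⟨e.1, e.1, 𝟙 e.1⟩) :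
    reduceCons e [] = [e] := by
  simp only [reduceCons, if_neg he]

lemma reduceCons_cons_of_eq {e e' : Σ a b : C, a ⟶ b} (he : e ≠ ⟨e.1, e.1, 𝟙 e.1⟩)
    (hc : e.2.1 = e'.1) (w : CatWord C) :
    reduceCons e (e' :: w) = reduceCons ⟨e.1, e'.2.1, e.2.2 ≫ eqToHom hc ≫ e'.2.2⟩ w := by
  simp only [reduceCons, if_neg he, dif_pos hc]

lemma reduceCons_cons_of_ne {e e' : Σ a b : C, a ⟶ b} (he : e ≠ ⟨e.1, e.1, 𝟙 e.1⟩)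
    (hc : e.2.1 ≠ e'.1) (w : CatWord C) : reduceCons e (e' :: w) = e :: e' :: w := by
  simp only [reduceCons, if_neg he, dif_neg hc]

lemma Reduced.tail {e : Σ a b : C, a ⟶ b} {w : CatWord C} (h : Reduced (e :: w)) :
    Reduced w :=
  ⟨fun x hx => h.1 x (List.mem_cons_of_mem e hx), h.2.tail⟩

lemma reduceCons_of_reduced {e : Σ a b : C, a ⟶ b} {w : CatWord C} (h : Reduced (e :: w)) :
    reduceCons e w = e :: w := by
  have he := h.1 e List.mem_cons_self
  cases w with
  | nil => exact reduceCons_nil he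
  | cons e' w => exact reduceCons_cons_of_ne he (List.isChain_cons_cons.mp h.2).1 w

lemma Reduced.reduceCons (e : Σ a b : C, a ⟶ b) {w : CatWord C} (hw : Reduced w) :
    Reduced (reduceCons e w) := by
  induction w generalizing e with
  | nil =>
    by_cases he : e = ⟨e.1, e.1, 𝟙 e.1⟩
    · rwa [he, reduceCons_id]
    · exact reduceCons_nil he ▸ ⟨by simpa using he, List.isChain_singleton e⟩
  | cons e' w ih =>
    by_cases he : e = ⟨e.1, e.1, 𝟙 e.1⟩
    · rwa [he, reduceCons_id]
    by_cases hc : e.2.1 = e'.1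
    · rw [reduceCons_cons_of_eq he hc]
      exact ih _ hw.tail
    · rw [reduceCons_cons_of_ne he hc]
      refine ⟨fun x hx => ?_, List.isChain_cons_cons.mpr ⟨hc, hw.2⟩⟩
      rcases List.mem_cons.mp hx with rfl | hx
      exacts [he, hw.1 x hx]

lemma reduceCons_reduceCons {w : CatWord C} (hw : Reduced w) {a b c : C} (f : a ⟶ b)
    (g : b ⟶ c) :
    reduceCons ⟨a, b, f⟩ (reduceCons ⟨b, c, g⟩ w) = reduceCons ⟨a, c, f ≫ g⟩ w := by
  by_cases hf : (⟨a, b, f⟩ : Σ a b : C, a ⟶ b) = ⟨a, a, 𝟙 a⟩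
  · cases hf
    simp only [reduceCons_id, Category.id_comp]
  induction w generalizing c with
  | nil =>
    by_cases hg : (⟨b, c, g⟩ : Σ a b : C, a ⟶ b) = ⟨b, b, 𝟙 b⟩
    · cases hg
      simp only [reduceCons_id, Category.comp_id]
    · rw [reduceCons_nil hg, reduceCons_cons_of_eq hf rfl, eqToHom_refl, Category.id_comp]
  | cons e w ih =>
    obtain ⟨p, q, m⟩ := e
    by_cases hg : (⟨b, c, g⟩ : Σ a b : C, a ⟶ b) = ⟨b, b, 𝟙 b⟩
    · cases hg
      simp only [reduceCons_id, Category.comp_id]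
    by_cases hc : c = p
    · subst hc
      rw [reduceCons_cons_of_eq hg rfl]
      simp only [eqToHom_refl, Category.id_comp]
      rw [ih hw.tail]
      by_cases hfg : (⟨a, c, f ≫ g⟩ : Σ a b : C, a ⟶ b) = ⟨a, a, 𝟙 a⟩
      · rw [← Category.assoc]
        generalize f ≫ g = h at hfg ⊢
        cases hfg
        rw [reduceCons_id, Category.id_comp, reduceCons_of_reduced hw]
      · rw [reduceCons_cons_of_eq hfg rfl, eqToHom_refl, Category.id_comp, Category.assoc]
    · rw [reduceCons_cons_of_ne hg hc, reduceCons_cons_of_eq hf rfl, eqToHom_refl,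
        Category.id_comp]

noncomputable def normalize (w : CatWord C) : CatWord C := w.foldr reduceCons []

lemma normalize_cons (e : Σ a b : C, a ⟶ b) (w : CatWord C) :
    normalize (e :: w) = reduceCons e (normalize w) :=
  rfl

lemma reduced_normalize (w : CatWord C) : Reduced (normalize w) := by
  induction w with
  | nil => exact ⟨fun _ h => absurd h List.not_mem_nil, List.isChain_nil⟩
  | cons e w ih => exact ih.reduceCons e

lemma normalize_of_reduced {w : CatWord C} (hw : Reduced w) : normalize w = w := by
  induction w with
  | nil => rfl
  | cons e w ih =>
    rw [normalize_cons, ih hw.tail, reduceCons_of_reduced hw]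

lemma normalize_append (u v : CatWord C) : normalize (u ++ v) = u.foldr reduceCons (normalize v) :=
  List.foldr_append

lemma normalize_eq_of_rwStep {w z : CatWord C} (h : RwStep w z) : normalize w = normalize z := by
  cases h with
  | del u v a =>
    rw [normalize_append, normalize_append, normalize_cons, reduceCons_id]
  | comp u v f g =>
    rw [normalize_append, normalize_append, normalize_cons, normalize_cons, normalize_cons,
      reduceCons_reduceCons (reduced_normalize v)]

lemma normalize_eq_of_reflTransGen {w z : CatWord C} (h : Relation.ReflTransGen RwStep w z) :
    normalize w = normalize z := by
  induction h with
  | refl => rfl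
  | tail _ hstep ih => exact ih.trans (normalize_eq_of_rwStep hstep)

end CatWord

open CatWord

lemma IsNormalForm.reduced {w : CatWord C} (hw : IsNormalForm w) : Reduced w := by
  induction w with
  | nil => exact reduced_normalize []
  | cons e w ih =>
    have hw' : Reduced w := ih fun z hz => hw (e :: z) (hz.append_left [e])
    have he : e ≠ ⟨e.1, e.1, 𝟙 e.1⟩ := fun h => hw w (h ▸ RwStep.del [] w e.1)
    refine ⟨fun x hx => ?_, ?_⟩
    · rcases List.mem_cons.mp hx with rfl | hx
      exacts [he, hw'.1 x hx]
    · cases w with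
      | nil => exact List.isChain_singleton e
      | cons e' w =>
        refine List.isChain_cons_cons.mpr ⟨fun hc => ?_, hw'.2⟩
        obtain ⟨a, b, f⟩ := e
        obtain ⟨b', c, g⟩ := e'
        obtain rfl : b = b' := hc
        exact hw _ (RwStep.comp [] w f g)

lemma IsNormalForm.eq_normalize_of_reflTransGen {w n : CatWord C} (hn : IsNormalForm n)
    (h : Relation.ReflTransGen RwStep w n) : n = normalize w :=
  (normalize_of_reduced hn.reduced).symm.trans (normalize_eq_of_reflTransGen h).symm

end

open CatWord in
/-- The set `M(C)` of normal-form words, with multiplication `x • y := nf (y ++ x)`, is a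
monoid: the multiplication is associative on normal forms and the empty word is a
two-sided identity.  Here `nf` is any function assigning to each word its (unique)
normal form. -/
theorem normal_forms_monoid (C : Type*) [Category C] (nf : CatWord C → CatWord C)
    (hnf : ∀ w : CatWord C, Relation.ReflTransGen RwStep w (nf w) ∧ IsNormalForm (nf w)) :
    (∀ x y z : CatWord C, IsNormalForm x → IsNormalForm y → IsNormalForm z →
      -- `(x • y) • z = x • (y • z)` where `x • y := nf (y ++ x)`
      nf (z ++ nf (y ++ x)) = nf (nf (z ++ y) ++ x)) ∧
    (∀ x : CatWord C, IsNormalForm x →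
      -- `x • [] = x = [] • x`
      nf ([] ++ x) = x ∧ nf (x ++ []) = x) := by
  have nf_of_isNormalForm {x : CatWord C} (hx : IsNormalForm x) : nf x = x :=
    ((hnf x).2.eq_normalize_of_reflTransGen (hnf x).1).trans (normalize_of_reduced hx.reduced)
  refine ⟨fun x y z _ _ _ => ?_, fun x hx => ⟨nf_of_isNormalForm hx, ?_⟩⟩
  · have hleft : Relation.ReflTransGen RwStep (z ++ (y ++ x)) (nf (z ++ nf (y ++ x))) :=
      (RwStep.reflTransGen_append .refl (hnf _).1).trans (hnf _).1
    have hright : Relation.ReflTransGen RwStep ((z ++ y) ++ x) (nf (nf (z ++ y) ++ x)) :=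
      (RwStep.reflTransGen_append (hnf _).1 .refl).trans (hnf _).1
    rw [(hnf _).2.eq_normalize_of_reflTransGen hleft,
      (hnf _).2.eq_normalize_of_reflTransGen hright, List.append_assoc]
  · rw [List.append_nil, nf_of_isNormalForm hx]
end

section
/- Let M be a partial group, n ≥ 1, f, g ∈ M, and let w₀, w₁, …, w_{2n} be nonempty words in M with w₀ = [f], w_{2n} = [g], and w_{2k+1} ⇝* w_{2k} and w_{2k+1} ⇝* w_{2k+2} for all 0 ≤ k ≤ n−1 (a zig-zag connecting [f] to [g]). Define the word w as the concatenation of the odd-indexed words taken alternately plain and formally inverted, namely w := w₁ ++ w₃⁻¹ ++ w₅ ++ w₇⁻¹ ++ ⋯ ++ w_{2n−1} when n is odd, and w := w₁ ++ w₃⁻¹ ++ w₅ ++ ⋯ ++ w_{2n−1}⁻¹ ++ w_{2n} when n is even. Then w ⇝* [f] and w ⇝* [g]. -/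
/-!
Formal inversion is compatible with contraction, because `Π [b⁻¹, a⁻¹] = (Π [a, b])⁻¹` (both are
inverses of `Π [a, b]`, and inverses in a partial group are unique); moreover `v⁻¹ ++ v ⇝* [1]`,
and `[1]` is absorbed by a nonempty neighbour. So the pair `w₄ₖ₊₁ ++ w₄ₖ₊₃⁻¹` contracts both to
`w₄ₖ₊₂ ++ w₄ₖ₊₂⁻¹ ⇝* [1]` and to `w₄ₖ ++ w₄ₖ₊₄⁻¹`. By induction on `k`, the concatenation `u` of
the first `2k` blocks is left neutral (`u ++ x ⇝* x` for nonempty `x`) and `u ++ w₄ₖ ⇝* w₀`.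
With `2k + 1` blocks, the last block `w₄ₖ₊₁` contracts to `w₄ₖ`, giving `w₀`, or to `w₄ₖ₊₂`,
which `u` leaves alone.
-/

/-- A partial group in Chermak's sense: a nonempty set `M` with a domain `D` of words
containing all words of length at most `1`, a product `Π` (here `pi`, given as a total
function whose axioms only concern words in `D`), and an involution `inv`. -/
structure PartialGroup (M : Type u) where
  /-- The underlying set is nonempty. -/
  nonempty : Nonempty M
  /-- The set of words on which the product is defined. -/
  D : Set (List M)
  /-- The product `Π : D → M` (extended arbitrarily to all words). -/
  pi : List M → M
  /-- The inversion `x ↦ x⁻¹`. -/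
  inv : M → M
  /-- `D` contains all words of length at most `1`. -/
  mem_D_of_length_le_one : ∀ w : List M, w.length ≤ 1 → w ∈ D
  /-- (i) `Π [f] = f`. -/
  pi_single : ∀ f : M, pi [f] = f
  /-- (ii) if `u ++ v ∈ D` then `u ∈ D`. -/
  mem_D_of_append_left : ∀ u v : List M, u ++ v ∈ D → u ∈ D
  /-- (ii) if `u ++ v ∈ D` then `v ∈ D`. -/
  mem_D_of_append_right : ∀ u v : List M, u ++ v ∈ D → v ∈ D
  /-- (iii) if `u ++ v ++ w ∈ D` then `u ++ [Π v] ++ w ∈ D`. -/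
  mem_D_contract : ∀ u v w : List M, u ++ v ++ w ∈ D → u ++ [pi v] ++ w ∈ D
  /-- (iii) if `u ++ v ++ w ∈ D` then `Π (u ++ v ++ w) = Π (u ++ [Π v] ++ w)`. -/
  pi_contract : ∀ u v w : List M, u ++ v ++ w ∈ D → pi (u ++ v ++ w) = pi (u ++ [pi v] ++ w)
  /-- `inv` is an involution. -/
  inv_inv : ∀ x : M, inv (inv x) = x
  /-- (iv) if `w ∈ D` then `w⁻¹ ++ w ∈ D`, where `w⁻¹` is the entrywise-inverted
  reverse of `w`. -/
  mem_D_inv_append : ∀ w ∈ D, (w.reverse.map inv) ++ w ∈ D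
  /-- (iv) if `w ∈ D` then `Π (w⁻¹ ++ w) = 1 = Π []`. -/
  pi_inv_append : ∀ w ∈ D, pi ((w.reverse.map inv) ++ w) = pi []

/-- The formal inverse of a word: reverse it and invert each entry. -/
def PartialGroup.wInv {M : Type u} (P : PartialGroup M) (w : List M) : List M :=
  w.reverse.map P.inv

/-- The single-contraction relation `⇝` on words in a partial group:
`u ++ [a, b] ++ v ⇝ u ++ [Π [a, b]] ++ v` whenever `[a, b] ∈ D`. -/
def PartialGroup.Contract {M : Type u} (P : PartialGroup M) (x y : List M) : Prop :=
  ∃ (u v : List M) (a b : M), [a, b] ∈ P.D ∧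
    x = u ++ [a, b] ++ v ∧ y = u ++ [P.pi [a, b]] ++ v

/-- The reflexive–transitive closure `⇝*` of the single-contraction relation. -/
def PartialGroup.ContractStar {M : Type u} (P : PartialGroup M) : List M → List M → Prop :=
  Relation.ReflTransGen P.Contract

namespace PartialGroup

variable {M : Type u}

notation:50 x:51 " ⇝*[" P "] " y:51 => PartialGroup.ContractStar P x y

section Algebra

variable (P : PartialGroup M)

lemma wInv_append (u v : List M) : P.wInv (u ++ v) = P.wInv v ++ P.wInv u := by
  simp [wInv]

lemma wInv_cons (a : M) (t : List M) : P.wInv (a :: t) = P.wInv t ++ [P.inv a] := by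
  simp [wInv]

lemma wInv_wInv (t : List M) : P.wInv (P.wInv t) = t := by
  simp [wInv, List.map_reverse, Function.comp_def, P.inv_inv]

lemma wInv_ne_nil {t : List M} (h : t ≠ []) : P.wInv t ≠ [] := by
  simp [wInv, h]

lemma wInv_mem_D {t : List M} (h : t ∈ P.D) : P.wInv t ∈ P.D :=
  P.mem_D_of_append_left _ t (P.mem_D_inv_append t h)

lemma singleton_mem_D (a : M) : [a] ∈ P.D :=
  P.mem_D_of_length_le_one [a] (by simp)

lemma one_pair_mem_D (b : M) : [P.pi [], b] ∈ P.D := by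
  simpa using P.mem_D_contract [] [] [b] (P.singleton_mem_D b)

lemma pi_one_pair (b : M) : P.pi [P.pi [], b] = b := by
  simpa [P.pi_single] using (P.pi_contract [] [] [b] (P.singleton_mem_D b)).symm

lemma pair_one_mem_D (a : M) : [a, P.pi []] ∈ P.D := by
  simpa using P.mem_D_contract [a] [] [] (by simpa using P.singleton_mem_D a)

lemma pi_pair_one (a : M) : P.pi [a, P.pi []] = a := by
  simpa [P.pi_single] using (P.pi_contract [a] [] [] (by simpa using P.singleton_mem_D a)).symm

lemma inv_pair_mem_D (a : M) : [P.inv a, a] ∈ P.D := by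
  simpa using P.mem_D_inv_append [a] (P.singleton_mem_D a)

lemma pi_inv_pair (a : M) : P.pi [P.inv a, a] = P.pi [] := by
  simpa using P.pi_inv_append [a] (P.singleton_mem_D a)

lemma pi_pair_inv (a : M) : P.pi [a, P.inv a] = P.pi [] := by
  simpa [P.inv_inv] using P.pi_inv_append [P.inv a] (P.singleton_mem_D _)

/-- Evaluate `Π [d, c, c⁻¹]` in two ways. -/
lemma eq_inv_of_pi_pair_eq_one {d c : M} (h : [d, c] ∈ P.D) (hdc : P.pi [d, c] = P.pi []) :
    d = P.inv c := by
  have h4 : [d, c, P.inv c, P.inv d] ∈ P.D := by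
    simpa [wInv, P.inv_inv] using P.mem_D_inv_append _ (P.wInv_mem_D h)
  have h3 : [d, c, P.inv c] ∈ P.D := P.mem_D_of_append_left _ [P.inv d] h4
  have hd : P.pi [d, c, P.inv c] = d := by
    simpa [P.pi_pair_inv, P.pi_pair_one] using P.pi_contract [d] [c, P.inv c] [] (by simpa using h3)
  have hc : P.pi [d, c, P.inv c] = P.inv c := by
    simpa [hdc, P.pi_one_pair] using P.pi_contract [] [d, c] [P.inv c] (by simpa using h3)
  rw [← hd, hc]

/-- Contract `[b⁻¹, a⁻¹, a, b]` to `[Π [b⁻¹, a⁻¹], Π [a, b]]`, whose product is still `1`. -/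
lemma inv_pi_pair {a b : M} (h : [a, b] ∈ P.D) :
    P.inv (P.pi [a, b]) = P.pi [P.inv b, P.inv a] := by
  have h4 : [P.inv b, P.inv a, a, b] ∈ P.D := by simpa using P.mem_D_inv_append [a, b] h
  have hp4 : P.pi [P.inv b, P.inv a, a, b] = P.pi [] := by simpa using P.pi_inv_append [a, b] h
  have h3 : [P.inv b, P.inv a, P.pi [a, b]] ∈ P.D := by
    simpa using P.mem_D_contract [P.inv b, P.inv a] [a, b] [] (by simpa using h4)
  have hp3 : P.pi [P.inv b, P.inv a, P.pi [a, b]] = P.pi [] := by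
    simpa [hp4] using (P.pi_contract [P.inv b, P.inv a] [a, b] [] (by simpa using h4)).symm
  refine (P.eq_inv_of_pi_pair_eq_one ?_ ?_).symm
  · simpa using P.mem_D_contract [] [P.inv b, P.inv a] [P.pi [a, b]] (by simpa using h3)
  · simpa [hp3] using (P.pi_contract [] [P.inv b, P.inv a] [P.pi [a, b]] (by simpa using h3)).symm

end Algebra

section Contraction

variable {P : PartialGroup M}

lemma ContractStar.trans {x y z : List M} (hxy : x ⇝*[P] y) (hyz : y ⇝*[P] z) : x ⇝*[P] z :=
  Relation.ReflTransGen.trans hxy hyz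

instance : Trans P.ContractStar P.ContractStar P.ContractStar :=
  ⟨ContractStar.trans⟩

lemma ContractStar.refl (x : List M) : x ⇝*[P] x :=
  Relation.ReflTransGen.refl

lemma Contract.append_append {x y : List M} (h : P.Contract x y) (s t : List M) :
    P.Contract (s ++ x ++ t) (s ++ y ++ t) := by
  obtain ⟨u, v, a, b, hD, rfl, rfl⟩ := h
  exact ⟨s ++ u, v ++ t, a, b, hD, by simp, by simp⟩

lemma ContractStar.append_append {x y : List M} (h : x ⇝*[P] y) (s t : List M) :
    s ++ x ++ t ⇝*[P] s ++ y ++ t :=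
  Relation.ReflTransGen.lift (fun z => s ++ z ++ t) (fun _ _ hc => hc.append_append s t) _ _ h

lemma ContractStar.append_left {x y : List M} (h : x ⇝*[P] y) (s : List M) :
    s ++ x ⇝*[P] s ++ y := by
  simpa using h.append_append s []

lemma ContractStar.append_right {x y : List M} (h : x ⇝*[P] y) (t : List M) :
    x ++ t ⇝*[P] y ++ t := by
  simpa using h.append_append [] t

lemma ContractStar.append {x y x' y' : List M} (h : x ⇝*[P] y) (h' : x' ⇝*[P] y') :
    x ++ x' ⇝*[P] y ++ y' :=
  calc x ++ x' ⇝*[P] y ++ x' := h.append_right x'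
    _ ⇝*[P] y ++ y' := h'.append_left y

lemma ContractStar.wInv {x y : List M} (h : x ⇝*[P] y) : P.wInv x ⇝*[P] P.wInv y := by
  refine Relation.ReflTransGen.lift P.wInv (fun _ _ hc => ?_) _ _ h
  obtain ⟨u, v, a, b, hD, rfl, rfl⟩ := hc
  refine ⟨P.wInv v, P.wInv u, P.inv b, P.inv a, by simpa [PartialGroup.wInv] using P.wInv_mem_D hD,
    ?_, ?_⟩
  · simp [P.wInv_append, P.wInv_cons]
  · simp [P.wInv_append, P.wInv_cons, ← P.inv_pi_pair hD]

variable (P)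

lemma contractStar_pair {a b : M} (hD : [a, b] ∈ P.D) (u v : List M) :
    u ++ [a, b] ++ v ⇝*[P] u ++ [P.pi [a, b]] ++ v :=
  Relation.ReflTransGen.single ⟨u, v, a, b, hD, rfl, rfl⟩

lemma contractStar_one_append {t : List M} (ht : t ≠ []) : [P.pi []] ++ t ⇝*[P] t := by
  obtain ⟨b, s, rfl⟩ := List.exists_cons_of_ne_nil ht
  simpa [P.pi_one_pair] using P.contractStar_pair (P.one_pair_mem_D b) [] s

lemma contractStar_append_one {t : List M} (ht : t ≠ []) : t ++ [P.pi []] ⇝*[P] t := by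
  obtain ⟨s, a, rfl⟩ := (List.eq_nil_or_concat t).resolve_left ht
  simpa [P.pi_pair_one] using P.contractStar_pair (P.pair_one_mem_D a) s []

lemma contractStar_wInv_append {t : List M} (ht : t ≠ []) : P.wInv t ++ t ⇝*[P] [P.pi []] := by
  induction t with
  | nil => exact absurd rfl ht
  | cons a s ih =>
    rcases eq_or_ne s [] with rfl | hs
    · simpa [P.pi_inv_pair, PartialGroup.wInv] using P.contractStar_pair (P.inv_pair_mem_D a) [] []
    · calc P.wInv (a :: s) ++ a :: s ⇝*[P] P.wInv s ++ [P.pi []] ++ s := by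
            simpa [P.wInv_cons, P.pi_inv_pair] using
              P.contractStar_pair (P.inv_pair_mem_D a) (P.wInv s) s
        _ ⇝*[P] P.wInv s ++ s := by
            simpa using (P.contractStar_one_append hs).append_left (P.wInv s)
        _ ⇝*[P] [P.pi []] := ih hs

lemma contractStar_append_wInv {t : List M} (ht : t ≠ []) : t ++ P.wInv t ⇝*[P] [P.pi []] := by
  simpa [P.wInv_wInv] using P.contractStar_wInv_append (P.wInv_ne_nil ht)

end Contraction

section Zigzag

variable (P : PartialGroup M)

def IsLeftNeutral (u : List M) : Prop :=
  ∀ x ≠ [], u ++ x ⇝*[P] x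

variable {P}

lemma IsLeftNeutral.append_append_wInv {u a b c : List M} (hu : P.IsLeftNeutral u)
    (hab : a ⇝*[P] b) (hcb : c ⇝*[P] b) (hb : b ≠ []) :
    P.IsLeftNeutral (u ++ a ++ P.wInv c) := fun x hx =>
  calc u ++ a ++ P.wInv c ++ x ⇝*[P] u ++ (b ++ P.wInv b) ++ x := by
        simpa using (hab.append hcb.wInv).append_append u x
    _ ⇝*[P] u ++ [P.pi []] ++ x := (P.contractStar_append_wInv hb).append_append u x
    _ ⇝*[P] [P.pi []] ++ x := by simpa using hu ([P.pi []] ++ x) (by simp)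
    _ ⇝*[P] x := P.contractStar_one_append hx

lemma ContractStar.append_append_wInv_append {u v a b c d : List M} (hu : u ++ b ⇝*[P] v)
    (hab : a ⇝*[P] b) (hcd : c ⇝*[P] d) (hb : b ≠ []) (hd : d ≠ []) :
    u ++ a ++ P.wInv c ++ d ⇝*[P] v :=
  calc u ++ a ++ P.wInv c ++ d ⇝*[P] u ++ b ++ (P.wInv d ++ d) := by
        simpa using (hab.append hcd.wInv).append_append u d
    _ ⇝*[P] u ++ b ++ [P.pi []] := (P.contractStar_wInv_append hd).append_left (u ++ b)
    _ ⇝*[P] u ++ b := by simpa using (P.contractStar_append_one hb).append_left u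
    _ ⇝*[P] v := hu

variable (P)

def zigzagWord (w : ℕ → List M) (m : ℕ) : List M :=
  List.flatten ((List.range m).map fun j =>
    if j % 2 = 0 then w (2 * j + 1) else P.wInv (w (2 * j + 1)))

lemma zigzagWord_two_mul_add_one (w : ℕ → List M) (k : ℕ) :
    P.zigzagWord w (2 * k + 1) = P.zigzagWord w (2 * k) ++ w (4 * k + 1) := by
  simp [zigzagWord, List.range_succ, ← mul_assoc]

lemma zigzagWord_two_mul_add_two (w : ℕ → List M) (k : ℕ) :
    P.zigzagWord w (2 * k + 2) =
      P.zigzagWord w (2 * k) ++ w (4 * k + 1) ++ P.wInv (w (4 * k + 3)) := by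
  simp [zigzagWord, List.range_succ, Nat.add_mod, mul_add, ← mul_assoc]

variable {P} {w : ℕ → List M} {n : ℕ}

lemma zigzagWord_two_mul_contractStar (hne : ∀ i ≤ 2 * n, w i ≠ [])
    (hzig : ∀ k < n, w (2 * k + 1) ⇝*[P] w (2 * k) ∧ w (2 * k + 1) ⇝*[P] w (2 * k + 2))
    {k : ℕ} (hk : 2 * k ≤ n) :
    P.IsLeftNeutral (P.zigzagWord w (2 * k)) ∧ P.zigzagWord w (2 * k) ++ w (4 * k) ⇝*[P] w 0 := by
  induction k with
  | zero => exact ⟨fun x _ => ContractStar.refl x, ContractStar.refl (w 0)⟩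
  | succ k ih =>
    obtain ⟨hneutral, hend⟩ := ih (by omega)
    obtain ⟨h₁₀, h₁₂⟩ := hzig (2 * k) (by omega)
    obtain ⟨h₃₂, h₃₄⟩ := hzig (2 * k + 1) (by omega)
    rw [show 2 * (2 * k) = 4 * k by ring] at h₁₀ h₁₂
    rw [show 2 * (2 * k + 1) = 4 * k + 2 by ring] at h₃₂ h₃₄
    rw [show 2 * (k + 1) = 2 * k + 2 by ring, show 4 * (k + 1) = 4 * k + 2 + 2 by ring,
      P.zigzagWord_two_mul_add_two]
    exact ⟨hneutral.append_append_wInv h₁₂ h₃₂ (hne _ (by omega)),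
      hend.append_append_wInv_append h₁₀ h₃₄ (hne _ (by omega)) (hne _ (by omega))⟩

lemma zigzagWord_two_mul_add_one_contractStar (hne : ∀ i ≤ 2 * n, w i ≠ [])
    (hzig : ∀ k < n, w (2 * k + 1) ⇝*[P] w (2 * k) ∧ w (2 * k + 1) ⇝*[P] w (2 * k + 2))
    {k : ℕ} (hk : 2 * k + 1 ≤ n) :
    P.zigzagWord w (2 * k + 1) ⇝*[P] w 0 ∧ P.zigzagWord w (2 * k + 1) ⇝*[P] w (4 * k + 2) := by
  obtain ⟨hneutral, hend⟩ := zigzagWord_two_mul_contractStar hne hzig (k := k) (by omega)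
  obtain ⟨h₁₀, h₁₂⟩ := hzig (2 * k) (by omega)
  rw [show 2 * (2 * k) = 4 * k by ring] at h₁₀ h₁₂
  rw [P.zigzagWord_two_mul_add_one]
  exact ⟨(h₁₀.append_left _).trans hend,
    (h₁₂.append_left _).trans (hneutral _ (hne _ (by omega)))⟩

end Zigzag

end PartialGroup

theorem zigzag_mountain_general {M : Type u} (P : PartialGroup M) (n : ℕ)
    (f g : M) (w : ℕ → List M)
    (h0 : w 0 = [f]) (h2n : w (2 * n) = [g])
    (hne : ∀ i ≤ 2 * n, w i ≠ [])
    (hzig : ∀ k < n, P.ContractStar (w (2 * k + 1)) (w (2 * k)) ∧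
      P.ContractStar (w (2 * k + 1)) (w (2 * k + 2))) :
    P.ContractStar
      ((List.flatten ((List.range n).map fun j =>
          if j % 2 = 0 then w (2 * j + 1) else P.wInv (w (2 * j + 1)))) ++
        (if n % 2 = 0 then w (2 * n) else [])) [f] ∧
    P.ContractStar
      ((List.flatten ((List.range n).map fun j =>
          if j % 2 = 0 then w (2 * j + 1) else P.wInv (w (2 * j + 1)))) ++
        (if n % 2 = 0 then w (2 * n) else [])) [g] := by
  rw [← h0, ← h2n]
  obtain ⟨k, rfl | rfl⟩ := n.even_or_odd'
  · rw [if_pos (Nat.mul_mod_right 2 k), show 2 * (2 * k) = 4 * k by ring]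
    obtain ⟨hneutral, hend⟩ := PartialGroup.zigzagWord_two_mul_contractStar hne hzig le_rfl
    exact ⟨hend, hneutral _ (hne _ (by omega))⟩
  · rw [if_neg (by omega), List.append_nil, show 2 * (2 * k + 1) = 4 * k + 2 by ring]
    exact PartialGroup.zigzagWord_two_mul_add_one_contractStar hne hzig le_rfl

/-- Given a zig-zag `w₀, w₁, …, w_{2n}` of nonempty words connecting `[f]` to `[g]`
(with `w_{2k+1} ⇝* w_{2k}` and `w_{2k+1} ⇝* w_{2k+2}`), the word
`w := w₁ ++ w₃⁻¹ ++ w₅ ++ w₇⁻¹ ++ ⋯ ++ w_{2n−1}` (for `n` odd), resp.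
`w := w₁ ++ w₃⁻¹ ++ w₅ ++ ⋯ ++ w_{2n−1}⁻¹ ++ w_{2n}` (for `n` even),
satisfies `w ⇝* [f]` and `w ⇝* [g]`. -/
theorem zigzag_mountain {M : Type u} (P : PartialGroup M) (n : ℕ) (hn : 1 ≤ n)
    (f g : M) (w : ℕ → List M)
    (h0 : w 0 = [f]) (h2n : w (2 * n) = [g])
    (hne : ∀ i ≤ 2 * n, w i ≠ [])
    (hzig : ∀ k < n, P.ContractStar (w (2 * k + 1)) (w (2 * k)) ∧
      P.ContractStar (w (2 * k + 1)) (w (2 * k + 2))) :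
    P.ContractStar
      ((List.flatten ((List.range n).map fun j =>
          if j % 2 = 0 then w (2 * j + 1) else P.wInv (w (2 * j + 1)))) ++
        (if n % 2 = 0 then w (2 * n) else [])) [f] ∧
    P.ContractStar
      ((List.flatten ((List.range n).map fun j =>
          if j % 2 = 0 then w (2 * j + 1) else P.wInv (w (2 * j + 1)))) ++
        (if n % 2 = 0 then w (2 * n) else [])) [g] :=
  zigzag_mountain_general P n f g w h0 h2n hne hzig
end
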